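/- Let w be a cyclically reduced word of length m over Σ_k with an appearance of u^{-1} at position j overlapping an appearance of u at position 0, where u is the prefix of w of length |u|; i.e., g_{i_l}^{α_l} = g_{i_{j+|u|-l}}^{-α_{j+|u|-l}} (indices mod m) for l = 1,...,|u|, with 1 ≤ j ≤ |u|+1. Then a contradiction arises: if j and |u| have the same parity, setting l = (j+|u|)/2 gives g_{i_l}^{α_l} = g_{i_l}^{-α_l}, which is impossible; if they have different parity, setting l = (j+|u|-1)/2 gives g_{i_l}^{α_l} = g_{i_{l+1}}^{-α_{l+1}}, contradicting cyclic reducedness. -/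

import Mathlib

/-- A letter `g_i^{±1}` of the alphabet `Σ_k`. -/
abbrev Letter (k : ℕ) := Fin k × Bool

/-- The inverse letter: `(g_i^{α})⁻¹ = g_i^{-α}`. -/
def Letter.inv {k : ℕ} (x : Letter k) : Letter k := (x.1, !x.2)

theorem modLt {α : Type*} {w : List α} (hw : w ≠ []) (x : ℕ) : x % w.length < w.length :=
  Nat.mod_lt _ (List.length_pos_of_ne_nil hw)

/-- `w` is cyclically reduced: no two cyclically consecutive letters are mutually inverse. -/
def CyclicallyReduced {k : ℕ} (w : List (Letter k)) : Prop :=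
  ∀ i : Fin w.length,
    w.get ⟨((i : ℕ) + 1) % w.length, Nat.mod_lt _ i.pos⟩ ≠ Letter.inv (w.get i)

/-! The overlap `u⁻¹` is a reflection of `u` about the midpoint `(j + L) / 2`. If that midpoint is
a position, the letter there equals its own inverse; otherwise the two letters around it are
mutually inverse neighbours, against cyclic reducedness. -/

namespace Letter

variable {k : ℕ}

@[simp]
theorem inv_inv (x : Letter k) : x.inv.inv = x := by
  simp [inv]

theorem inv_ne_self (x : Letter k) : x.inv ≠ x := by
  simp [inv, Prod.ext_iff]

end Letter

theorem CyclicallyReduced.get_succ_mod_ne_inv {k : ℕ} {w : List (Letter k)}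
    (hcyc : CyclicallyReduced w) (hw : w ≠ []) (n : ℕ) :
    w.get ⟨(n + 1) % w.length, modLt hw _⟩ ≠ (w.get ⟨n % w.length, modLt hw _⟩).inv := by
  have h := hcyc ⟨n % w.length, modLt hw _⟩
  simp only [Nat.mod_add_mod] at h
  exact h

theorem stmt1_general {k : ℕ} (w : List (Letter k)) (hw : w ≠ []) (hcyc : CyclicallyReduced w)
    (L j : ℕ) (hL : 1 ≤ L) (hj1 : 1 ≤ j) (hj2 : j ≤ L + 1)
    (heq : ∀ l, 1 ≤ l → l ≤ L →
      w.get ⟨(l - 1) % w.length, modLt hw _⟩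
        = Letter.inv (w.get ⟨(j + L - l - 1) % w.length, modLt hw _⟩)) :
    False := by
  obtain ⟨l, hl | hl⟩ := Nat.even_or_odd' (j + L)
  · have h := heq l (by omega) (by omega)
    rw [show j + L - l - 1 = l - 1 by omega] at h
    exact Letter.inv_ne_self _ h.symm
  · have h := heq l (by omega) (by omega)
    rw [show j + L - l - 1 = l - 1 + 1 by omega] at h
    exact hcyc.get_succ_mod_ne_inv hw (l - 1) (by rw [h, Letter.inv_inv])

/-- Let `w = g_{i_1}^{α_1} ⋯ g_{i_m}^{α_m}` be cyclically reduced, and suppose its prefix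
`u` of length `L` has an appearance of `u⁻¹` at position `j`, overlapping the appearance
of `u` at position `0`; i.e. `g_{i_l}^{α_l} = g_{i_{j+L-l}}^{-α_{j+L-l}}` (indices mod `m`,
`1`-based) for `l = 1, …, L`, with `1 ≤ j ≤ L + 1`. Then a contradiction arises. -/
theorem stmt1 {k : ℕ} (w : List (Letter k)) (hw : w ≠ []) (hcyc : CyclicallyReduced w)
    (L j : ℕ) (hL : 1 ≤ L) (hLm : L ≤ w.length) (hj1 : 1 ≤ j) (hj2 : j ≤ L + 1)
    (heq : ∀ l, 1 ≤ l → l ≤ L →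
      w.get ⟨(l - 1) % w.length, modLt hw _⟩
        = Letter.inv (w.get ⟨(j + L - l - 1) % w.length, modLt hw _⟩)) :
    False :=
  stmt1_general w hw hcyc L j hL hj1 hj2 heq
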